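/- arXiv:0802.1173 — 5 statements merged into one kernel-verified Lean document; each statement's English description precedes it below -/
import Mathlib

section
/- Let G act selfsimilarly and contractingly on X* with nucleus N (a finite set such that for every g there is a level m(g) with g|_v ∈ N whenever |v| ≥ m(g)). Suppose h_1,...,h_{N+1} ∈ Stab(v) each have word length at most L, |v| ≥ m((N+1)L) where N = #N and m(M) = max of m(g) over ||g|| ≤ M, and suppose (v w_{i-1})^{h_i} = v w_i for words w_0,...,w_{N+1} of equal length. Then the words w_0,...,w_{N+1} cannot all be pairwise distinct. -/
structure SelfSimilarAction (G : Type*) [Group G] (X : Type*) where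
  act : List X → G → List X
  res : G → List X → G
  act_one : ∀ v, act v 1 = v
  act_mul : ∀ v g h, act v (g * h) = act (act v g) h
  act_length : ∀ v g, (act v g).length = v.length
  act_append : ∀ (v w : List X) (g : G), act (v ++ w) g = act v g ++ act w (res g v)
  res_mul : ∀ (g h : G) (v : List X), res (g * h) v = res g v * res h (act v g)
  res_one : ∀ v, res 1 v = 1

/-- `g` can be written as a product of at most `n` elements of `S`. -/
def IsWordLengthLE {G : Type*} [Group G] (S : Set G) (g : G) (n : ℕ) : Prop :=
  ∃ l : List G, (∀ s ∈ l, s ∈ S) ∧ l.length ≤ n ∧ l.prod = g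

lemma IsWordLengthLE.mul {G : Type*} [Group G] {S : Set G} {g h : G} {a b : ℕ}
    (hg : IsWordLengthLE S g a) (hh : IsWordLengthLE S h b) :
    IsWordLengthLE S (g * h) (a + b) := by
  obtain ⟨l1, hl1, hl1len, hl1p⟩ := hg
  obtain ⟨l2, hl2, hl2len, hl2p⟩ := hh
  refine ⟨l1 ++ l2, ?_, ?_, ?_⟩
  · intro s hs
    rcases List.mem_append.1 hs with hs | hs
    · exact hl1 s hs
    · exact hl2 s hs
  · simpa using Nat.add_le_add hl1len hl2len
  · simp [hl1p, hl2p]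

lemma IsWordLengthLE.mono {G : Type*} [Group G] {S : Set G} {g : G} {a b : ℕ}
    (hg : IsWordLengthLE S g a) (hab : a ≤ b) : IsWordLengthLE S g b := by
  obtain ⟨l, hl, hlen, hp⟩ := hg
  exact ⟨l, hl, hlen.trans hab, hp⟩

/-- Contracting selfsimilar action with nucleus `Nuc` of cardinality `N`: if
`h_1, ..., h_{N+1} ∈ Stab(v)` each have word length at most `L`, `|v| ≥ m((N+1)L)`,
and `(v w_{i-1})^{h_i} = v w_i` for words `w_0, ..., w_{N+1}` of equal length, then
the words `w_0, ..., w_{N+1}` cannot all be pairwise distinct. -/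
theorem stmt2 {G X : Type*} [Group G] (A : SelfSimilarAction G X)
    (S : Set G) (Nuc : Finset G) (N : ℕ) (hNcard : Nuc.card = N)
    (hSres : ∀ s ∈ S, ∀ v : List X, A.res s v ∈ S)
    (hNucS : ↑Nuc ⊆ S)
    (m : ℕ → ℕ)
    (hm : ∀ (M : ℕ) (g : G), IsWordLengthLE S g M →
      ∀ u : List X, m M ≤ u.length → A.res g u ∈ Nuc)
    (L : ℕ) (v : List X) (hv : m ((N + 1) * L) ≤ v.length)
    (h : ℕ → G) (w : ℕ → List X)
    (hstab : ∀ i, 1 ≤ i → i ≤ N + 1 → A.act v (h i) = v)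
    (hlen : ∀ i, 1 ≤ i → i ≤ N + 1 → IsWordLengthLE S (h i) L)
    (hwlen : ∀ i, i ≤ N + 1 → (w i).length = (w 0).length)
    (hstep : ∀ i, 1 ≤ i → i ≤ N + 1 → A.act (v ++ w (i - 1)) (h i) = v ++ w i) :
    ∃ i j, i ≤ N + 1 ∧ j ≤ N + 1 ∧ i ≠ j ∧ w i = w j := by
  -- partial products g i = h 1 * ... * h i
  set g : ℕ → G := fun i => ((List.range i).map (fun k => h (k + 1))).prod with hg
  have hg0 : g 0 = 1 := by simp [hg]
  have hgsucc : ∀ i, g (i + 1) = g i * h (i + 1) := by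
    intro i
    simp [hg, List.range_succ]
  -- key facts by induction
  have key : ∀ i, i ≤ N + 1 →
      A.act v (g i) = v ∧ A.act (v ++ w 0) (g i) = v ++ w i ∧
        IsWordLengthLE S (g i) (i * L) := by
    intro i
    induction i with
    | zero =>
      intro _
      refine ⟨by simp [hg0, A.act_one], by simp [hg0, A.act_one], ⟨[], by simp, by simp, by simp [hg0]⟩⟩
    | succ n ih =>
      intro hn
      obtain ⟨ha, hb, hc⟩ := ih (Nat.le_of_succ_le hn)
      have h1 : 1 ≤ n + 1 := Nat.succ_le_succ (Nat.zero_le n)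
      refine ⟨?_, ?_, ?_⟩
      · rw [hgsucc, A.act_mul, ha, hstab (n + 1) h1 hn]
      · rw [hgsucc, A.act_mul, hb]
        have := hstep (n + 1) h1 hn
        simpa using this
      · rw [hgsucc, Nat.succ_mul]
        exact hc.mul (hlen (n + 1) h1 hn)
  -- w i = act (w 0) (res (g i) v)
  have hw : ∀ i, i ≤ N + 1 → w i = A.act (w 0) (A.res (g i) v) := by
    intro i hi
    obtain ⟨ha, hb, _⟩ := key i hi
    rw [A.act_append, ha] at hb
    exact (List.append_cancel_left hb).symm
  -- res (g i) v ∈ Nuc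
  have hres : ∀ i, i ≤ N + 1 → A.res (g i) v ∈ Nuc := by
    intro i hi
    obtain ⟨_, _, hc⟩ := key i hi
    refine hm ((N + 1) * L) (g i) (hc.mono ?_) v hv
    exact Nat.mul_le_mul_right L hi
  -- pigeonhole over 0..N+1 (N+2 values) into Nuc (N values)
  have hcard : Nuc.card < (Finset.range (N + 2)).card := by
    simp [hNcard]
  obtain ⟨i, hi, j, hj, hij, hfij⟩ :=
    Finset.exists_ne_map_eq_of_card_lt_of_maps_to hcard
      (fun i hi => hres i (Nat.lt_succ_iff.1 (Finset.mem_range.1 hi)))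
  have hi' := Nat.lt_succ_iff.1 (Finset.mem_range.1 hi)
  have hj' := Nat.lt_succ_iff.1 (Finset.mem_range.1 hj)
  refine ⟨i, j, hi', hj', hij, ?_⟩
  rw [hw i hi', hw j hj', hfij]
end

section
/- Let G be a contracting selfsimilar group acting on X* with nucleus N of cardinality N, and generating set S closed under restriction with N ⊆ S. For every vertex v with |v| ≥ m((N+1)L) and every w ∈ X*, the orbit of vw under the subgroup generated by Stab_G(v) ∩ B_G(1,L) has cardinality at most 1 + q + q^2 + ... + q^{N+1}, where q = #(Stab_G(v) ∩ B_G(1,L)). -/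
section Aux

variable {G X : Type*} [Group G] (A : SelfSimilarAction G X)

/-- product of a list of stabilizers stabilizes. -/
lemma aux_act_prod (v : List X) : ∀ (l : List G), (∀ s ∈ l, A.act v s = v) →
    A.act v l.prod = v := by
  intro l
  induction l with
  | nil => intro _; simpa using A.act_one v
  | cons a t ih =>
      intro h
      rw [List.prod_cons, A.act_mul, h a (by simp), ih (fun s hs => h s (by simp [hs]))]

lemma aux_res_mul_stab (v : List X) (g h : G) (hg : A.act v g = v) :
    A.res (g * h) v = A.res g v * A.res h v := by
  rw [A.res_mul, hg]

/-- word length of products of lists. -/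
lemma aux_wordlen_prod (S : Set G) (L : ℕ) : ∀ (l : List G),
    (∀ g ∈ l, IsWordLengthLE S g L) → IsWordLengthLE S l.prod (l.length * L) := by
  intro l
  induction l with
  | nil => intro _; exact ⟨[], by simp, by simp, by simp⟩
  | cons a t ih =>
      intro h
      obtain ⟨la, hla, hlalen, hlaprod⟩ := h a (by simp)
      obtain ⟨lt, hlt, hltlen, hltprod⟩ := ih (fun g hg => h g (by simp [hg]))
      refine ⟨la ++ lt, ?_, ?_, ?_⟩
      · intro s hs
        rcases List.mem_append.mp hs with hs | hs
        · exact hla s hs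
        · exact hlt s hs
      · simp only [List.length_append, List.length_cons]
        calc la.length + lt.length ≤ L + t.length * L := Nat.add_le_add hlalen hltlen
          _ = (t.length + 1) * L := by ring
      · rw [List.prod_append, hlaprod, hltprod, List.prod_cons]

end Aux

/-- Orbits under vertex stabilizers: for a contracting selfsimilar group with nucleus
`Nuc` of cardinality `N` and generating set `S` closed under restriction with
`Nuc ⊆ S`, for every vertex `v` with `|v| ≥ m((N+1)L)` and every word `w`, the orbit
of `vw` under the subgroup generated by `Stab_G(v) ∩ B_G(1,L)` has cardinality at most
`1 + q + q^2 + ... + q^{N+1}`, where `q = #(Stab_G(v) ∩ B_G(1,L))`. -/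
theorem stmt3 {G X : Type*} [Group G] (A : SelfSimilarAction G X)
    (S : Set G) (Nuc : Finset G) (N : ℕ) (hNcard : Nuc.card = N)
    (hSres : ∀ s ∈ S, ∀ v : List X, A.res s v ∈ S)
    (hNucS : ↑Nuc ⊆ S)
    (m : ℕ → ℕ)
    (hm : ∀ (M : ℕ) (g : G), IsWordLengthLE S g M →
      ∀ u : List X, m M ≤ u.length → A.res g u ∈ Nuc)
    (L : ℕ) (v : List X) (hv : m ((N + 1) * L) ≤ v.length) (w : List X)
    (hfin : {g : G | A.act v g = v ∧ IsWordLengthLE S g L}.Finite) :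
    Set.ncard
        {u : List X |
          ∃ g ∈ Subgroup.closure {g : G | A.act v g = v ∧ IsWordLengthLE S g L},
            A.act (v ++ w) g = u} ≤
      ∑ i ∈ Finset.range (N + 2),
        {g : G | A.act v g = v ∧ IsWordLengthLE S g L}.ncard ^ i := by
  set Q : Set G := {g : G | A.act v g = v ∧ IsWordLengthLE S g L} with hQ
  -- reachable points with products of at most `k` generators
  set Ok : ℕ → Set (List X) := fun k =>
    {u | ∃ l : List G, (∀ s ∈ l, s ∈ Q) ∧ l.length ≤ k ∧ A.act (v ++ w) l.prod = u}
    with hOk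
  -- shortening lemma
  have key : ∀ (n : ℕ) (l : List G), (∀ s ∈ l, s ∈ Q) → l.length ≤ n →
      ∃ l' : List G, (∀ s ∈ l', s ∈ Q) ∧ l'.length ≤ N + 1 ∧
        A.res l'.prod v = A.res l.prod v := by
    intro n
    induction n with
    | zero =>
        intro l hl hlen
        exact ⟨l, hl, by omega, rfl⟩
    | succ n ih =>
        intro l hl hlen
        by_cases hsmall : l.length ≤ N + 1
        · exact ⟨l, hl, hsmall, rfl⟩
        · push_neg at hsmall
          have htake_mem : ∀ (k : ℕ), ∀ s ∈ l.take k, s ∈ Q :=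
            fun k s hs => hl s (List.take_subset k l hs)
          have hres_take : ∀ i : Fin (N + 1), A.res ((l.take (i + 1)).prod) v ∈ Nuc := by
            intro i
            refine hm ((N + 1) * L) _ ?_ v hv
            have h1 := aux_wordlen_prod S L (l.take (i + 1))
              (fun g hg => (htake_mem (i + 1) g hg).2)
            obtain ⟨lw, hlw, hlwlen, hlwprod⟩ := h1
            refine ⟨lw, hlw, ?_, hlwprod⟩
            have h2 : (l.take (i + 1)).length ≤ i + 1 := by
              simpa using List.length_take_le (i + 1) l
            have h3 : (i : ℕ) + 1 ≤ N + 1 := i.2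
            calc lw.length ≤ (l.take (i + 1)).length * L := hlwlen
              _ ≤ (N + 1) * L := Nat.mul_le_mul_right L (le_trans h2 h3)
          -- pigeonhole on restrictions of prefixes
          have hpigeon : ∃ i j : Fin (N + 1), i ≠ j ∧
              A.res ((l.take (i + 1)).prod) v = A.res ((l.take (j + 1)).prod) v := by
            obtain ⟨i, j, hij, he⟩ := Fintype.exists_ne_map_eq_of_card_lt
              (fun i : Fin (N + 1) => (⟨_, hres_take i⟩ : Nuc))
              (by simp [hNcard])
            exact ⟨i, j, hij, by simpa using congrArg Subtype.val he⟩
          obtain ⟨i0, j0, hij0, he0⟩ := hpigeon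
          -- arrange i < j
          obtain ⟨i, j, hij, he⟩ : ∃ i j : ℕ, i < j ∧ j ≤ N ∧
              A.res ((l.take (i + 1)).prod) v = A.res ((l.take (j + 1)).prod) v := by
            rcases lt_or_gt_of_ne hij0 with h | h
            · exact ⟨i0, j0, h, by omega, he0⟩
            · exact ⟨j0, i0, h, by omega, he0.symm⟩
          obtain ⟨hjN, he⟩ := he
          -- the shortened list
          set l' : List G := l.take (i + 1) ++ l.drop (j + 1) with hl'
          have hl'mem : ∀ s ∈ l', s ∈ Q := by
            intro s hs
            rcases List.mem_append.mp hs with hs | hs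
            · exact hl s (List.take_subset _ l hs)
            · exact hl s (List.drop_subset _ l hs)
          have hlenl : N + 2 ≤ l.length := hsmall
          have hl'len : l'.length ≤ n := by
            rw [hl', List.length_append, List.length_take, List.length_drop]
            omega
          have hstab_take : ∀ k : ℕ, A.act v ((l.take k).prod) = v :=
            fun k => aux_act_prod A v _ (fun s hs => (htake_mem k s hs).1)
          have hres_l' : A.res l'.prod v = A.res l.prod v := by
            have h1 : A.res l'.prod v
                = A.res (l.take (i + 1)).prod v * A.res (l.drop (j + 1)).prod v := by
              rw [hl', List.prod_append]
              exact aux_res_mul_stab A v _ _ (hstab_take (i + 1))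
            have h2 : A.res l.prod v
                = A.res (l.take (j + 1)).prod v * A.res (l.drop (j + 1)).prod v := by
              conv_lhs => rw [← List.take_append_drop (j + 1) l]
              rw [List.prod_append]
              exact aux_res_mul_stab A v _ _ (hstab_take (j + 1))
            rw [h1, h2, he]
          obtain ⟨l'', hl''mem, hl''len, hl''res⟩ := ih l' hl'mem hl'len
          exact ⟨l'', hl''mem, hl''len, by rw [hl''res, hres_l']⟩
  -- every product of generators acts on v ++ w like a short product
  have hstab_list : ∀ (l : List G), (∀ s ∈ l, s ∈ Q) → A.act v l.prod = v :=
    fun l hl => aux_act_prod A v l (fun s hs => (hl s hs).1)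
  have hact_vw : ∀ g : G, A.act v g = v →
      A.act (v ++ w) g = v ++ A.act w (A.res g v) := by
    intro g hg
    rw [A.act_append, hg]
  have hreach : ∀ (l : List G), (∀ s ∈ l, s ∈ Q) →
      A.act (v ++ w) l.prod ∈ Ok (N + 1) := by
    intro l hl
    obtain ⟨l', hl'mem, hl'len, hl'res⟩ := key l.length l hl le_rfl
    refine ⟨l', hl'mem, hl'len, ?_⟩
    rw [hact_vw _ (hstab_list l hl), hact_vw _ (hstab_list l' hl'mem), hl'res]
  -- finiteness and cardinality of Ok k
  have hncard_prod : ∀ (s : Set (List X)) (t : Set G),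
      (s ×ˢ t).ncard = s.ncard * t.ncard := by
    intro s t
    rw [← Nat.card_coe_set_eq, Nat.card_congr (Equiv.Set.prod s t), Nat.card_prod,
      Nat.card_coe_set_eq, Nat.card_coe_set_eq]
  have hcard : ∀ k : ℕ, (Ok k).Finite ∧
      (Ok k).ncard ≤ ∑ i ∈ Finset.range (k + 1), Q.ncard ^ i := by
    intro k
    induction k with
    | zero =>
        have hsub : Ok 0 ⊆ {v ++ w} := by
          rintro u ⟨l, _, hlen, hact⟩
          have : l = [] := List.length_eq_zero_iff.mp (Nat.le_zero.mp hlen)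
          subst this
          simp only [List.prod_nil] at hact
          rw [← hact, A.act_one]
          rfl
        refine ⟨(Set.finite_singleton _).subset hsub, ?_⟩
        calc (Ok 0).ncard ≤ ({v ++ w} : Set (List X)).ncard :=
              Set.ncard_le_ncard hsub (Set.finite_singleton _)
          _ = 1 := Set.ncard_singleton _
          _ ≤ _ := by simp
    | succ k ih =>
        obtain ⟨ihfin, ihcard⟩ := ih
        have hsub : Ok (k + 1) ⊆
            insert (v ++ w) ((fun p : List X × G => A.act p.1 p.2) '' (Ok k ×ˢ Q)) := by
          rintro u ⟨l, hlmem, hlen, hact⟩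
          rcases l.eq_nil_or_concat' with rfl | ⟨t, a, rfl⟩
          · left
            simp only [List.prod_nil] at hact
            rw [← hact, A.act_one]
          · right
            refine ⟨(A.act (v ++ w) t.prod, a), ⟨⟨t, fun s hs => hlmem s (by simp [hs]),
              by simp at hlen ⊢; omega, rfl⟩, hlmem a (by simp)⟩, ?_⟩
            have hp : (t ++ [a]).prod = t.prod * a := by
              rw [List.prod_append, List.prod_singleton]
            simp only
            rw [← A.act_mul, ← hp]
            exact hact
        have hfin' : ((fun p : List X × G => A.act p.1 p.2) '' (Ok k ×ˢ Q)).Finite :=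
          (ihfin.prod hfin).image _
        refine ⟨(hfin'.insert _).subset hsub, ?_⟩
        calc (Ok (k + 1)).ncard
            ≤ (insert (v ++ w) ((fun p : List X × G => A.act p.1 p.2) '' (Ok k ×ˢ Q))).ncard :=
              Set.ncard_le_ncard hsub (hfin'.insert _)
          _ ≤ ((fun p : List X × G => A.act p.1 p.2) '' (Ok k ×ˢ Q)).ncard + 1 :=
              Set.ncard_insert_le _ _
          _ ≤ (Ok k ×ˢ Q).ncard + 1 :=
              Nat.add_le_add_right (Set.ncard_image_le (ihfin.prod hfin)) 1
          _ = (Ok k).ncard * Q.ncard + 1 := by rw [hncard_prod]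
          _ ≤ (∑ i ∈ Finset.range (k + 1), Q.ncard ^ i) * Q.ncard + 1 :=
              Nat.add_le_add_right (Nat.mul_le_mul_right _ ihcard) 1
          _ = ∑ i ∈ Finset.range (k + 2), Q.ncard ^ i := by
              conv_rhs => rw [geom_sum_succ]
              ring
  obtain ⟨hOfin, hOcard⟩ := hcard (N + 1)
  -- base point is reachable
  have hbase : v ++ w ∈ Ok (N + 1) :=
    ⟨[], by simp, by simp, by simpa using A.act_one (v ++ w)⟩
  -- Ok (N+1) is invariant under the closure
  have hclosed : ∀ g ∈ Subgroup.closure Q, ∀ u ∈ Ok (N + 1), A.act u g ∈ Ok (N + 1) := by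
    intro g hg
    induction hg using Subgroup.closure_induction with
    | mem s hs =>
        rintro u ⟨l, hlmem, _, rfl⟩
        have := hreach (l ++ [s]) (by
          intro x hx
          rcases List.mem_append.mp hx with hx | hx
          · exact hlmem x hx
          · simp only [List.mem_singleton] at hx; subst hx; exact hs)
        rwa [List.prod_append, List.prod_singleton, A.act_mul] at this
    | one =>
        intro u hu
        rwa [A.act_one]
    | mul a b _ _ pa pb =>
        intro u hu
        rw [A.act_mul]
        exact pb _ (pa u hu)
    | inv a _ pa =>
        intro u hu
        have hmaps : Set.MapsTo (fun u => A.act u a) (Ok (N + 1)) (Ok (N + 1)) :=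
          fun u hu => pa u hu
        have hinj : Set.InjOn (fun u => A.act u a) (Ok (N + 1)) := by
          intro x _ y _ hxy
          have hxy' : A.act x a = A.act y a := hxy
          have : A.act (A.act x a) a⁻¹ = A.act (A.act y a) a⁻¹ :=
            congrArg (fun z => A.act z a⁻¹) hxy'
          rwa [← A.act_mul, ← A.act_mul, mul_inv_cancel, A.act_one, A.act_one] at this
        have hbij := (hOfin.injOn_iff_bijOn_of_mapsTo hmaps).mp hinj
        obtain ⟨u', hu', hu'eq⟩ := hbij.surjOn hu
        have : A.act u a⁻¹ = u' := by
          rw [← hu'eq]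
          simp only
          rw [← A.act_mul, mul_inv_cancel, A.act_one]
        rw [this]
        exact hu'
  -- conclude
  have horbit : {u : List X | ∃ g ∈ Subgroup.closure Q, A.act (v ++ w) g = u}
      ⊆ Ok (N + 1) := by
    rintro u ⟨g, hg, rfl⟩
    exact hclosed g hg _ hbase
  calc Set.ncard {u : List X | ∃ g ∈ Subgroup.closure Q, A.act (v ++ w) g = u}
      ≤ (Ok (N + 1)).ncard := Set.ncard_le_ncard horbit hOfin
    _ ≤ _ := hOcard
end

section
/- Let V be a horizontal vertex set in an augmented tree Σ. Then the shadow S(V) is connected if and only if the induced subcomplex Σ(V) is connected. -/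
/-- An augmented tree on the words `X*`: the tree of words (with vertical edges from
`v` to `xv`) augmented by a set of horizontal edges joining words of equal length, such
that the endpoints of a horizontal edge have truncations (deleting the first letter)
which either coincide or are again joined by a horizontal edge. -/
structure AugmentedTree (X : Type*) where
  horiz : List X → List X → Prop
  horiz_symm : ∀ u v, horiz u v → horiz v u
  horiz_irrefl : ∀ u, ¬ horiz u u
  horiz_length : ∀ u v, horiz u v → u.length = v.length
  horiz_push : ∀ (x y : X) (u v : List X), horiz (x :: u) (y :: v) → u = v ∨ horiz u v

/-- The graph of an augmented tree: vertical tree edges together with horizontal edges. -/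
def AugmentedTree.graph {X : Type*} (T : AugmentedTree X) : SimpleGraph (List X) where
  Adj u v := T.horiz u v ∨ (∃ x : X, v = x :: u) ∨ (∃ x : X, u = x :: v)
  symm := by
    constructor
    intro u v h
    rcases h with h | ⟨x, rfl⟩ | ⟨x, rfl⟩
    · exact Or.inl (T.horiz_symm u v h)
    · exact Or.inr (Or.inr ⟨x, rfl⟩)
    · exact Or.inr (Or.inl ⟨x, rfl⟩)
  loopless := by
    constructor
    intro u h
    rcases h with h | ⟨x, hx⟩ | ⟨x, hx⟩
    · exact T.horiz_irrefl u h
    · have := congrArg List.length hx; simp at this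
    · have := congrArg List.length hx; simp at this

/-- The cone over a word `v`: the set of words ending in `v`. -/
def Cone {X : Type*} (v : List X) : Set (List X) := {u | ∃ w : List X, u = w ++ v}

/-- The vertex set of the shadow `S(V)`: the union of the cones over elements of `V`. -/
def shadowSet {X : Type*} (V : Set (List X)) : Set (List X) := ⋃ v ∈ V, Cone v

/-! Each point of a cone is joined to its tip by vertical edges, so `S(V)` is `Σ(V)` with
connected cones attached. Conversely, truncation `u ↦ u.rtake n` to level `n` retracts `S(V)`
onto `V` and sends every edge to an edge or a point (vertical edges collapse; horizontal edges
truncate to horizontal edges or points by the defining property of augmented trees), so it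
carries walks to walks. -/

namespace SimpleGraph

variable {V W : Type*} {G : SimpleGraph V} {H : SimpleGraph W}

theorem Reachable.map_of_adj_imp_eq_or_adj (f : V → W)
    (hf : ∀ a b, G.Adj a b → f a = f b ∨ H.Adj (f a) (f b)) {a b : V} (h : G.Reachable a b) :
    H.Reachable (f a) (f b) := by
  rw [reachable_iff_reflTransGen] at h ⊢
  refine Relation.ReflTransGen.lift' f (fun a b hab => ?_) _ _ h
  change Relation.ReflTransGen H.Adj (f a) (f b)
  rcases hf a b hab with heq | hadj
  · exact heq ▸ Relation.ReflTransGen.refl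
  · exact Relation.ReflTransGen.single hadj

theorem Connected.of_surjective_of_adj_imp_eq_or_adj (f : V → W) (hsurj : f.Surjective)
    (hf : ∀ a b, G.Adj a b → f a = f b ∨ H.Adj (f a) (f b)) (hG : G.Connected) :
    H.Connected := by
  obtain ⟨v⟩ := hG.nonempty
  rw [connected_iff_exists_forall_reachable]
  refine ⟨f v, fun w => ?_⟩
  obtain ⟨u, rfl⟩ := hsurj w
  exact (hG v u).map_of_adj_imp_eq_or_adj f hf

end SimpleGraph

theorem List.rtake_cons_of_le {α : Type*} (x : α) {l : List α} {n : ℕ} (hn : n ≤ l.length) :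
    (x :: l).rtake n = l.rtake n := by
  simp [List.rtake, Nat.succ_sub hn]

theorem List.rtake_append_length {α : Type*} (l₁ l₂ : List α) :
    (l₁ ++ l₂).rtake l₂.length = l₂ := by
  simp [List.rtake]

section Shadow

variable {X : Type*}

theorem self_mem_cone (v : List X) : v ∈ Cone v := ⟨[], rfl⟩

theorem mem_shadowSet {V : Set (List X)} {u : List X} :
    u ∈ shadowSet V ↔ ∃ v ∈ V, u ∈ Cone v := by
  simp [shadowSet]

theorem subset_shadowSet (V : Set (List X)) : V ⊆ shadowSet V :=
  fun v hv => mem_shadowSet.2 ⟨v, hv, self_mem_cone v⟩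

theorem cone_subset_shadowSet {V : Set (List X)} {v : List X} (hv : v ∈ V) :
    Cone v ⊆ shadowSet V :=
  fun _ hu => mem_shadowSet.2 ⟨v, hv, hu⟩

variable {V : Set (List X)} {n : ℕ}

theorem le_length_of_mem_shadowSet (hV : ∀ v ∈ V, v.length = n) {u : List X}
    (hu : u ∈ shadowSet V) : n ≤ u.length := by
  obtain ⟨v, hv, w, rfl⟩ := mem_shadowSet.1 hu
  simp [hV v hv]

theorem rtake_mem_of_mem_shadowSet (hV : ∀ v ∈ V, v.length = n) {u : List X}
    (hu : u ∈ shadowSet V) : u.rtake n ∈ V := by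
  obtain ⟨v, hv, w, rfl⟩ := mem_shadowSet.1 hu
  rwa [← hV v hv, List.rtake_append_length]

end Shadow

namespace AugmentedTree

variable {X : Type*} (T : AugmentedTree X)

theorem horiz_drop {u v : List X} (h : T.horiz u v) (k : ℕ) :
    u.drop k = v.drop k ∨ T.horiz (u.drop k) (v.drop k) := by
  induction k generalizing u v with
  | zero => exact Or.inr h
  | succ k ih =>
    match u, v, T.horiz_length _ _ h with
    | [], [], _ => exact absurd h (T.horiz_irrefl [])
    | x :: u, y :: v, _ =>
      rcases T.horiz_push x y u v h with rfl | h'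
      · exact Or.inl rfl
      · simpa using ih h'

theorem rtake_eq_or_adj_of_adj {n : ℕ} {u v : List X} (hu : n ≤ u.length)
    (hv : n ≤ v.length) (h : T.graph.Adj u v) :
    u.rtake n = v.rtake n ∨ T.graph.Adj (u.rtake n) (v.rtake n) := by
  rcases h with h | ⟨x, rfl⟩ | ⟨x, rfl⟩
  · have hlen := T.horiz_length _ _ h
    rw [List.rtake, List.rtake, hlen]
    exact (T.horiz_drop h (v.length - n)).imp_right Or.inl
  · exact Or.inl (List.rtake_cons_of_le x hu).symm
  · exact Or.inl (List.rtake_cons_of_le x hv)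

theorem connected_induce_cone (v : List X) : (T.graph.induce (Cone v)).Connected := by
  rw [SimpleGraph.connected_iff_exists_forall_reachable]
  refine ⟨⟨v, self_mem_cone v⟩, ?_⟩
  rintro ⟨_, w, rfl⟩
  induction w with
  | nil => rfl
  | cons x w ih =>
    refine ih.trans (SimpleGraph.Adj.reachable ?_)
    exact Or.inr (Or.inl ⟨x, rfl⟩)

theorem connected_induce_shadowSet {V : Set (List X)} (hV : (T.graph.induce V).Connected) :
    (T.graph.induce (shadowSet V)).Connected := by
  obtain ⟨⟨v₀, hv₀⟩⟩ := hV.nonempty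
  refine T.graph.induce_connected_of_patches v₀ (subset_shadowSet V hv₀) fun hu => ?_
  obtain ⟨v, hv, hu⟩ := mem_shadowSet.1 hu
  refine ⟨V ∪ Cone v, Set.union_subset (subset_shadowSet V) (cone_subset_shadowSet hv),
    Or.inl hv₀, Or.inr hu, ?_⟩
  exact T.graph.induce_union_connected hV.preconnected (T.connected_induce_cone v).preconnected
    ⟨v, hv, self_mem_cone v⟩ _ _

theorem connected_induce_of_connected_induce_shadowSet {V : Set (List X)} {n : ℕ}
    (hV : ∀ v ∈ V, v.length = n) (hS : (T.graph.induce (shadowSet V)).Connected) :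
    (T.graph.induce V).Connected := by
  let truncate : shadowSet V → V := fun u => ⟨u.1.rtake n, rtake_mem_of_mem_shadowSet hV u.2⟩
  refine hS.of_surjective_of_adj_imp_eq_or_adj truncate (fun v => ?_) (fun a b hab => ?_)
  · refine ⟨⟨v.1, subset_shadowSet V v.2⟩, Subtype.ext ?_⟩
    simpa [hV v.1 v.2] using List.rtake_append_length [] v.1
  · simpa only [truncate, Subtype.ext_iff, SimpleGraph.comap_adj, Function.Embedding.subtype_apply]
      using T.rtake_eq_or_adj_of_adj (le_length_of_mem_shadowSet hV a.2)
        (le_length_of_mem_shadowSet hV b.2) hab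

end AugmentedTree

/-- The shadow `S(V)` of a horizontal vertex set `V` (as an induced subcomplex of the
augmented tree) is connected if and only if the induced subcomplex `Σ(V)` is connected. -/
theorem stmt9 {X : Type*} (T : AugmentedTree X) (n : ℕ) (V : Set (List X))
    (hV : ∀ v ∈ V, v.length = n) :
    (T.graph.induce (shadowSet V)).Connected ↔ (T.graph.induce V).Connected :=
  ⟨T.connected_induce_of_connected_induce_shadowSet hV, T.connected_induce_shadowSet⟩
end

section
/- If V_1, V_2 are horizontal vertex subsets at the same level of an augmented tree with |V_1 - V_2| ≥ 2, then the shadows satisfy |S(V_1) - S(V_2)| ≥ 2. -/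
/-!
Truncating two words to their suffixes of a common length `n` maps a pair of equal or
adjacent words to a pair of equal or adjacent words: vertical edges collapse to a point,
and a horizontal edge is pushed down letter by letter. Hence a pair of words at distance
at most one in `S(V₁) × S(V₂)` would truncate to such a pair in `V₁ × V₂`.
-/

lemma SimpleGraph.Connected.two_le_dist_iff {V : Type*} {G : SimpleGraph V} (hG : G.Connected)
    {u v : V} : 2 ≤ G.dist u v ↔ u ≠ v ∧ ¬ G.Adj u v := by
  refine ⟨fun h => ⟨?_, fun hadj => ?_⟩,
    fun ⟨hne, hnadj⟩ => hG.one_lt_dist_of_ne_of_not_adj hne hnadj⟩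
  · rintro rfl
    simp at h
  · rw [SimpleGraph.dist_eq_one_iff_adj.mpr hadj] at h
    omega

namespace AugmentedTree

variable {X : Type*} (T : AugmentedTree X)

lemma graph_reachable_nil (u : List X) : T.graph.Reachable u [] := by
  induction u with
  | nil => rfl
  | cons x u ih => exact (SimpleGraph.Adj.reachable (Or.inr (Or.inr ⟨x, rfl⟩))).trans ih

lemma graph_connected : T.graph.Connected :=
  SimpleGraph.connected_iff_exists_forall_reachable _ |>.mpr
    ⟨[], fun u => (T.graph_reachable_nil u).symm⟩

lemma eq_or_horiz_of_horiz_append {w₁ w₂ v₁ v₂ : List X} (hw : w₁.length = w₂.length)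
    (h : T.horiz (w₁ ++ v₁) (w₂ ++ v₂)) : v₁ = v₂ ∨ T.horiz v₁ v₂ := by
  induction w₁ generalizing w₂ with
  | nil =>
    obtain rfl : w₂ = [] := List.eq_nil_of_length_eq_zero hw.symm
    exact Or.inr h
  | cons x w₁ ih =>
    obtain _ | ⟨y, w₂⟩ := w₂
    · simp at hw
    rcases T.horiz_push x y _ _ h with heq | hhoriz
    · exact Or.inl (List.append_inj_right heq (by simpa using hw))
    · exact ih (by simpa using hw) hhoriz

lemma eq_or_adj_of_adj_append {w₁ w₂ v₁ v₂ : List X} (hv : v₁.length = v₂.length)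
    (h : T.graph.Adj (w₁ ++ v₁) (w₂ ++ v₂)) : v₁ = v₂ ∨ T.graph.Adj v₁ v₂ := by
  rcases h with hhoriz | ⟨x, hx⟩ | ⟨x, hx⟩
  · have hw : w₁.length = w₂.length := by
      have := T.horiz_length _ _ hhoriz
      simp only [List.length_append] at this
      omega
    exact (T.eq_or_horiz_of_horiz_append hw hhoriz).imp_right Or.inl
  · exact Or.inl (List.append_inj_right' (hx.trans (List.cons_append ..).symm).symm hv)
  · exact Or.inl (List.append_inj_right' (hx.trans (List.cons_append ..).symm) hv)

lemma two_le_dist_append {w₁ w₂ v₁ v₂ : List X} (hv : v₁.length = v₂.length)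
    (h : 2 ≤ T.graph.dist v₁ v₂) : 2 ≤ T.graph.dist (w₁ ++ v₁) (w₂ ++ v₂) := by
  obtain ⟨hne, hnadj⟩ := T.graph_connected.two_le_dist_iff.mp h
  refine T.graph_connected.two_le_dist_iff.mpr ⟨fun heq => hne ?_, fun hadj => ?_⟩
  · exact List.append_inj_right' heq hv
  · exact (T.eq_or_adj_of_adj_append hv hadj).elim hne hnadj

end AugmentedTree

/-- If `V₁, V₂` are horizontal vertex sets at the same level of an augmented tree with
`|V₁ - V₂| ≥ 2`, then the shadows satisfy `|S(V₁) - S(V₂)| ≥ 2`. -/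
theorem stmt10 {X : Type*} (T : AugmentedTree X) (n : ℕ) (V₁ V₂ : Set (List X))
    (hV₁ : ∀ v ∈ V₁, v.length = n) (hV₂ : ∀ v ∈ V₂, v.length = n)
    (hsep : ∀ a ∈ V₁, ∀ b ∈ V₂, 2 ≤ T.graph.dist a b) :
    ∀ a ∈ shadowSet V₁, ∀ b ∈ shadowSet V₂, 2 ≤ T.graph.dist a b := by
  intro a ha b hb
  simp only [shadowSet, Cone, Set.mem_iUnion, Set.mem_ofPred_eq] at ha hb
  obtain ⟨v₁, hv₁, w₁, rfl⟩ := ha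
  obtain ⟨v₂, hv₂, w₂, rfl⟩ := hb
  have hlen : v₁.length = v₂.length := (hV₁ v₁ hv₁).trans (hV₂ v₂ hv₂).symm
  exact T.two_le_dist_append hlen (hsep v₁ hv₁ v₂ hv₂)
end

section
/- Let Σ be an augmented tree with magic number m = m(H): any horizontal path of length at most H, when pushed down m levels, has endpoints at distance at most one. If u lies in the umbra U(V) and v ∈ C_u, then |v - complement of S(V)| ≥ |v| - (|u| + m). -/
/-- Every dart of the walk is a downward vertical step (deleting the first letter). -/
def WalkDown {X : Type*} (T : AugmentedTree X) {u v : List X} (p : T.graph.Walk u v) : Prop :=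
  ∀ d ∈ p.darts, ∃ x : X, d.toProd.1 = x :: d.toProd.2

/-- Every dart of the walk is an upward vertical step (prepending a letter). -/
def WalkUp {X : Type*} (T : AugmentedTree X) {u v : List X} (p : T.graph.Walk u v) : Prop :=
  ∀ d ∈ p.darts, ∃ x : X, d.toProd.2 = x :: d.toProd.1

/-- Every dart of the walk is a horizontal step. -/
def WalkHoriz {X : Type*} (T : AugmentedTree X) {u v : List X} (p : T.graph.Walk u v) : Prop :=
  ∀ d ∈ p.darts, T.horiz d.toProd.1 d.toProd.2

/-- A walk is in normal form (with horizontal part of length at most `H`) if it is the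
concatenation of a descending vertical segment, a horizontal segment of length at most
`H`, and an ascending vertical segment. -/
def IsNormalForm {X : Type*} (T : AugmentedTree X) (H : ℕ) {u v : List X}
    (p : T.graph.Walk u v) : Prop :=
  ∃ (a b : List X) (p₁ : T.graph.Walk u a) (p₂ : T.graph.Walk a b) (p₃ : T.graph.Walk b v),
    p = p₁.append (p₂.append p₃) ∧ WalkDown T p₁ ∧ WalkHoriz T p₂ ∧ WalkUp T p₃ ∧
      p₂.length ≤ H

/-- The umbra `U(V)`: the set of vertices of the shadow `S(V)` at distance greater
than 1 from the complement of `S(V)`. -/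
def umbraSet {X : Type*} (T : AugmentedTree X) (V : Set (List X)) : Set (List X) :=
  {u | u ∈ shadowSet V ∧ ∀ y : List X, y ∉ shadowSet V → 2 ≤ T.graph.dist u y}

/-!
If the normal form geodesic from `v ∈ C_u` to a point `y` outside the shadow turned horizontal
more than `m` levels above `u`, then pushing its horizontal part down to the level of `u` would,
by the magic number property and the push-down axiom, put `u` within distance one of a suffix of
`y`, which lies outside the shadow as well; this contradicts `u ∈ U(V)`. So the geodesic first
descends at least `|v| - (|u| + m)` levels.
-/

namespace AugmentedTree

variable {X : Type*} (T : AugmentedTree X)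

lemma eq_or_horiz_tail {c d : List X} (h : c = d ∨ T.horiz c d) :
    c.tail = d.tail ∨ T.horiz c.tail d.tail := by
  rcases h with rfl | h
  · exact Or.inl rfl
  match c, d, T.horiz_length _ _ h with
  | [], [], _ => exact absurd h (T.horiz_irrefl _)
  | x :: c, y :: d, _ => exact T.horiz_push x y c d h

lemma eq_or_horiz_drop {c d : List X} (k : ℕ) (h : c = d ∨ T.horiz c d) :
    c.drop k = d.drop k ∨ T.horiz (c.drop k) (d.drop k) := by
  induction k with
  | zero => exact h
  | succ k ih => simpa only [← List.tail_drop] using T.eq_or_horiz_tail ih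

lemma reachable_nil (c : List X) : T.graph.Reachable c [] := by
  induction c with
  | nil => rfl
  | cons x c ih =>
    exact (show T.graph.Adj (x :: c) c from Or.inr (Or.inr ⟨x, rfl⟩)).reachable.trans ih

lemma graph_preconnected : T.graph.Preconnected := fun c d =>
  (T.reachable_nil c).trans (T.reachable_nil d).symm

lemma dist_le_one_of_eq_or_horiz {c d : List X} (h : c = d ∨ T.horiz c d) :
    T.graph.dist c d ≤ 1 := by
  rcases h with rfl | h
  · simp
  · exact (SimpleGraph.dist_eq_one_iff_adj.mpr (Or.inl h)).le

lemma eq_or_horiz_of_dist_le_one {c d : List X} (hlen : c.length = d.length)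
    (h : T.graph.dist c d ≤ 1) : c = d ∨ T.horiz c d := by
  rcases Nat.le_one_iff_eq_zero_or_eq_one.mp h with h | h
  · exact Or.inl ((T.graph_preconnected c d).dist_eq_zero_iff.mp h)
  · rcases SimpleGraph.dist_eq_one_iff_adj.mp h with h | ⟨x, rfl⟩ | ⟨x, rfl⟩
    · exact Or.inr h
    all_goals simp at hlen

end AugmentedTree

section Walks

variable {X : Type*} {T : AugmentedTree X}

lemma WalkDown.exists_eq_append {s t : List X} {p : T.graph.Walk s t} (h : WalkDown T p) :
    ∃ w, s = w ++ t ∧ w.length = p.length := by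
  induction p with
  | nil => exact ⟨[], rfl, rfl⟩
  | @cons s s' t hadj q ih =>
    obtain ⟨x, rfl⟩ : ∃ x, s = x :: s' := h ⟨(s, s'), hadj⟩ (by simp)
    obtain ⟨w, rfl, hw⟩ := ih fun d hd => h d (by simp [hd])
    exact ⟨x :: w, rfl, by simp [hw]⟩

lemma WalkUp.walkDown_reverse {s t : List X} {p : T.graph.Walk s t} (h : WalkUp T p) :
    WalkDown T p.reverse := by
  intro d hd
  simp only [SimpleGraph.Walk.darts_reverse, List.mem_reverse, List.mem_map] at hd
  obtain ⟨d, hd, rfl⟩ := hd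
  exact h d hd

lemma WalkUp.isSuffix {s t : List X} {p : T.graph.Walk s t} (h : WalkUp T p) : s <:+ t := by
  obtain ⟨w, hw, -⟩ := h.walkDown_reverse.exists_eq_append
  exact ⟨w, hw.symm⟩

lemma WalkHoriz.length_eq {s t : List X} {p : T.graph.Walk s t} (h : WalkHoriz T p) :
    s.length = t.length := by
  induction p with
  | nil => rfl
  | @cons s s' t hadj q ih =>
    exact (T.horiz_length _ _ (h ⟨(s, s'), hadj⟩ (by simp))).trans
      (ih fun d hd => h d (by simp [hd]))

end Walks

lemma mem_shadowSet_of_isSuffix {X : Type*} {V : Set (List X)} {z w : List X}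
    (hz : z ∈ shadowSet V) (h : z <:+ w) : w ∈ shadowSet V := by
  simp only [shadowSet, Set.mem_iUnion, Cone, Set.mem_ofPred_eq] at hz ⊢
  obtain ⟨v₀, hv₀, t, rfl⟩ := hz
  obtain ⟨s, rfl⟩ := h
  exact ⟨v₀, hv₀, s ++ t, by simp⟩

theorem stmt14_general {X : Type*} (T : AugmentedTree X) (H m : ℕ)
    (hNF : ∀ u v : List X,
      ∃ p : T.graph.Walk u v, p.length = T.graph.dist u v ∧ IsNormalForm T H p)
    (hmagic : ∀ (u v : List X) (p : T.graph.Walk u v), WalkHoriz T p → p.length ≤ H →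
      m ≤ u.length → T.graph.dist (u.drop m) (v.drop m) ≤ 1)
    (V : Set (List X))
    (u : List X) (hu : u ∈ umbraSet T V) (v : List X) (hv : v ∈ Cone u) :
    ∀ y : List X, y ∉ shadowSet V → v.length ≤ T.graph.dist v y + (u.length + m) := by
  intro y hy
  obtain ⟨p, hp, a, b, p₁, p₂, p₃, rfl, hdown, hhoriz, hup, hH⟩ := hNF v y
  obtain ⟨w₁, rfl, hw₁⟩ := hdown.exists_eq_append
  have hab := hhoriz.length_eq
  obtain ⟨w, hw⟩ := hv
  simp only [SimpleGraph.Walk.length_append] at hp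
  by_contra! hlong
  have hlevel : u.length + m < a.length := by
    simp only [List.length_append] at hw hlong; omega
  have hua : u <:+ a :=
    List.suffix_of_suffix_length_le ⟨w, hw.symm⟩ (List.suffix_append w₁ a) (by omega)
  -- the horizontal segment, pushed down `a.length - u.length ≥ m` levels, ends at level `|u|`
  have hnear := T.eq_or_horiz_drop (a.length - u.length - m) <|
    T.eq_or_horiz_of_dist_le_one (by simp [hab]) (hmagic a b p₂ hhoriz hH (by omega))
  rw [List.drop_drop, List.drop_drop, show m + (a.length - u.length - m) = a.length - u.length
    by omega, ← List.suffix_iff_eq_drop.mp hua] at hnear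
  have hout : b.drop (a.length - u.length) ∉ shadowSet V := fun h =>
    hy (mem_shadowSet_of_isSuffix h ((List.drop_suffix _ b).trans hup.isSuffix))
  have hfar := hu.2 _ hout
  have hclose := T.dist_le_one_of_eq_or_horiz hnear
  omega

/-- Unit speed penetration: in a hyperbolic augmented tree with normal form geodesics
(horizontal part of length at most `H`) and magic number `m` (any horizontal path of
length at most `H`, pushed down `m` levels, has endpoints at distance at most one), if
`u` lies in the umbra `U(V)` and `v ∈ C_u`, then
`|v - complement of S(V)| ≥ |v| - (|u| + m)`. -/
theorem stmt14 {X : Type*} (T : AugmentedTree X) (H m : ℕ)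
    (hNF : ∀ u v : List X,
      ∃ p : T.graph.Walk u v, p.length = T.graph.dist u v ∧ IsNormalForm T H p)
    (hmagic : ∀ (u v : List X) (p : T.graph.Walk u v), WalkHoriz T p → p.length ≤ H →
      m ≤ u.length → T.graph.dist (u.drop m) (v.drop m) ≤ 1)
    (n : ℕ) (V : Set (List X)) (hV : ∀ v ∈ V, v.length = n)
    (u : List X) (hu : u ∈ umbraSet T V) (v : List X) (hv : v ∈ Cone u) :
    ∀ y : List X, y ∉ shadowSet V → v.length ≤ T.graph.dist v y + (u.length + m) :=
  stmt14_general T H m hNF hmagic V u hu v hv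
end
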